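/- Let K be a field, f(X,Y) = a_0(X) + a_1(X)Y + ... + a_m(X)Y^m and g(X,Y) = b_0(X) + b_1(X)Y + ... + b_n(X)Y^n with a_0·a_m·b_n ≠ 0, and assume f is irreducible as a polynomial in Y over K(X). Suppose a_m = p·q with p, q ∈ K[X], p irreducible over K. If deg p > (n-1)·deg q + mn·deg b_n + H_1(f), then the polynomial f(X, g(X,Y)) is irreducible over K(X). -/

import Mathlib

open Polynomial

/-- Ω(p): number of irreducible factors of `p`, counted with multiplicity. -/
noncomputable def Omega {R : Type*} [CommMonoidWithZero R]
    [UniqueFactorizationMonoid R] (p : R) : ℕ :=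
  Multiset.card (UniqueFactorizationMonoid.factors p)

/-- H₁(f) for f = a₀ + a₁Y + ⋯ + aₘYᵐ : the max of the degrees of a₀,…,a_{m-1}. -/
noncomputable def H1 {K : Type*} [Field K] (a : ℕ → Polynomial K) (m : ℕ) : ℕ :=
  (Finset.range m).sup fun i => (a i).natDegree

/-!
For `n ≥ 2`, `deg p` exceeds the degrees of `a₀`, `q` and `bₙ`, so the prime `p` divides the
leading coefficient `p q bₙᵐ` of `F = f(X, g)` exactly once and does not divide `a₀`. If `F` were
reducible over `K(X)`, Gauss's lemma would give a factor `D ∈ K[X][Y]` of positive degree whose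
leading coefficient `u` is prime to `p`. For a root `β` of `D`, `t = g(β)` is a root of `f` and
`uⁿ t` is integral over `K[X]`. As `K[X]` is integrally closed, the minimal polynomial
`u^{nm} f(Y / uⁿ) / aₘ` of `uⁿ t` has coefficients in `K[X]`, so `aₘ ∣ a₀ u^{nm}`, and then
`p ∣ a₀` or `p ∣ u`. The case `n = 1` is a linear change of variable.
-/

namespace Polynomial

theorem natDegree_sum_range_C_mul_X_pow {R : Type*} [Semiring R] {c : ℕ → R} {N : ℕ}
    (h : c N ≠ 0) : (∑ i ∈ Finset.range (N + 1), C (c i) * X ^ i).natDegree = N :=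
  natDegree_eq_of_le_of_coeff_ne_zero
    ((natDegree_le_iff_coeff_eq_zero).2 fun j hj => by simp [Nat.not_le.2 hj])
    (by simpa using h)

theorem leadingCoeff_sum_range_C_mul_X_pow {R : Type*} [Semiring R] {c : ℕ → R} {N : ℕ}
    (h : c N ≠ 0) : (∑ i ∈ Finset.range (N + 1), C (c i) * X ^ i).leadingCoeff = c N := by
  simp [leadingCoeff, natDegree_sum_range_C_mul_X_pow h]

section Field

variable {K : Type*} [Field K]

theorem _root_.Irreducible.comp_of_natDegree_eq_one {P r : K[X]} (hP : Irreducible P)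
    (hr : r.natDegree = 1) : Irreducible (P.comp r) := by
  have hr1 : r.coeff 1 ≠ 0 := by
    rw [← hr]
    exact leadingCoeff_ne_zero.2 (by rintro rfl; simp at hr)
  let := invertibleOfNonzero hr1
  rw [eq_X_add_C_of_natDegree_le_one hr.le]
  exact (MulEquiv.irreducible_iff (algEquivCMulXAddC (r.coeff 1) (r.coeff 0))).2 hP

theorem isUnit_scaleRoots_iff {P : K[X]} {s : K} : IsUnit (P.scaleRoots s) ↔ IsUnit P := by
  simp only [isUnit_iff_degree_eq_zero, degree_scaleRoots]

theorem _root_.Irreducible.scaleRoots {P : K[X]} (hP : Irreducible P) {s : K} (hs : s ≠ 0) :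
    Irreducible (P.scaleRoots s) := by
  refine ⟨isUnit_scaleRoots_iff.not.2 hP.not_isUnit, fun A B hAB => ?_⟩
  have hP_eq : P = A.scaleRoots s⁻¹ * B.scaleRoots s⁻¹ := by
    rw [← mul_scaleRoots_of_noZeroDivisors, ← hAB, ← scaleRoots_mul, mul_inv_cancel₀ hs,
      scaleRoots_one]
  simpa only [isUnit_scaleRoots_iff] using hP.isUnit_or_isUnit hP_eq

end Field

theorem isIntegral_pow_natDegree_smul_aeval {R A : Type*} [CommRing R] [CommRing A] [Algebra R A]
    {u : R} {β : A} (h : IsIntegral R (u • β)) (g : R[X]) :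
    IsIntegral R (u ^ g.natDegree • aeval β g) := by
  have hscale : aeval (u • β) (g.scaleRoots u) = u ^ g.natDegree • aeval β g := by
    rw [Algebra.smul_def, Algebra.smul_def, aeval_def, aeval_def, scaleRoots_eval₂_mul, map_pow]
  rw [← hscale]
  exact adjoin_le_integralClosure h (aeval_mem_adjoin_singleton R _)

variable {R K : Type*} [CommRing R] [IsDomain R] [Field K] [Algebra R K] [IsFractionRing R K]

theorem leadingCoeff_dvd_coeff_zero_mul_pow_of_isIntegral_smul [IsIntegrallyClosed R]
    {L : Type*} [CommRing L] [IsDomain L] [Algebra R L] [Algebra K L] [IsScalarTower R K L]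
    {f : R[X]} (hf : Irreducible (f.map (algebraMap R K))) {t : L} (ht : aeval t f = 0)
    {c : R} (hc : c ≠ 0) (hint : IsIntegral R (c • t)) :
    f.leadingCoeff ∣ f.coeff 0 * c ^ f.natDegree := by
  have hinj : Function.Injective (algebraMap R K) := IsFractionRing.injective R K
  have hlc : algebraMap R K f.leadingCoeff ≠ 0 :=
    (map_ne_zero_iff _ hinj).2 (leadingCoeff_ne_zero.2 fun h => by simp [h] at hf)
  have hirr : Irreducible ((f.scaleRoots c).map (algebraMap R K)) := by
    rw [map_scaleRoots _ _ _ hlc]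
    exact hf.scaleRoots ((map_ne_zero_iff _ hinj).2 hc)
  have hroot : aeval (c • t) ((f.scaleRoots c).map (algebraMap R K)) = 0 := by
    rw [aeval_map_algebraMap, Algebra.smul_def]
    exact scaleRoots_aeval_eq_zero ht
  -- `minpoly K (c • t) = f.scaleRoots c / f.leadingCoeff` has coefficients in `R`
  have hmin := minpoly.eq_of_irreducible hirr hroot
  rw [minpoly.isIntegrallyClosed_eq_field_fractions' K hint] at hmin
  refine ⟨(minpoly R (c • t)).coeff 0, hinj ?_⟩
  have h0 := congrArg (coeff · 0) hmin
  rw [leadingCoeff_map_of_leadingCoeff_ne_zero _ (by rwa [leadingCoeff_scaleRoots]),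
    leadingCoeff_scaleRoots] at h0
  simp only [coeff_mul_C, coeff_map, coeff_scaleRoots, Nat.sub_zero] at h0
  rw [map_mul _ f.leadingCoeff, ← h0]
  field_simp

theorem exists_dvd_natDegree_pos_not_dvd_leadingCoeff [IsGCDMonoid R] {F : R[X]}
    (hF : 0 < F.natDegree) (hred : ¬ Irreducible (F.map (algebraMap R K))) {p : R}
    (hp : ¬ p ^ 2 ∣ F.leadingCoeff) : ∃ D, D ∣ F ∧ 0 < D.natDegree ∧ ¬ p ∣ D.leadingCoeff := by
  let := Classical.arbitrary (NormalizedGCDMonoid R)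
  have hcontent : IsUnit (C (algebraMap R K F.content)) :=
    isUnit_C.2 (isUnit_iff_ne_zero.2 ((map_ne_zero_iff _ (IsFractionRing.injective R K)).2
      (content_eq_zero_iff.not.2 (ne_zero_of_natDegree_gt hF))))
  have hred' : ¬ Irreducible F.primPart := by
    rw [(isPrimitive_primPart F).irreducible_iff_irreducible_map_fraction_map (K := K),
      ← irreducible_isUnit_mul hcontent, ← map_C, ← Polynomial.map_mul,
      ← eq_C_content_mul_primPart]
    exact hred
  have hunit : ¬ IsUnit F.primPart := fun h =>
    hF.ne' (natDegree_primPart F ▸ natDegree_eq_zero_of_isUnit h)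
  obtain ⟨A, B, hAB, hA, hB⟩ : ∃ A B, F.primPart = A * B ∧ ¬ IsUnit A ∧ ¬ IsUnit B := by
    simpa [irreducible_iff, hunit] using hred'
  -- a primitive polynomial of degree zero is a unit
  have hpos : ∀ E, E ∣ F.primPart → ¬ IsUnit E → 0 < E.natDegree := fun E hE hEu => by
    refine Nat.pos_of_ne_zero fun h0 => hEu ?_
    rw [eq_C_of_natDegree_eq_zero h0] at hE ⊢
    exact isUnit_C.2 (isPrimitive_of_dvd (isPrimitive_primPart F) hE _ dvd_rfl)
  have hlc : A.leadingCoeff * B.leadingCoeff ∣ F.leadingCoeff := by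
    rw [eq_C_content_mul_primPart F, leadingCoeff_mul, leadingCoeff_C, hAB, leadingCoeff_mul]
    exact dvd_mul_left _ _
  have hF_dvd : F.primPart ∣ F := ⟨C F.content, by rw [mul_comm, ← eq_C_content_mul_primPart]⟩
  by_cases hpA : p ∣ A.leadingCoeff
  · refine ⟨B, ?_, hpos B ⟨A, by rw [hAB, mul_comm]⟩ hB, fun hpB => hp ?_⟩
    · exact (Dvd.intro_left A hAB.symm).trans hF_dvd
    · exact (pow_two p ▸ mul_dvd_mul hpA hpB).trans hlc
  · exact ⟨A, (Dvd.intro B hAB.symm).trans hF_dvd, hpos A ⟨B, hAB⟩ hA, hpA⟩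

theorem irreducible_map_comp_of_prime_dvd_leadingCoeff [IsGCDMonoid R] {f g : R[X]} {p : R}
    (hp : Prime p) (hf : Irreducible (f.map (algebraMap R K))) (hg : 0 < g.natDegree)
    (hpf : p ∣ f.leadingCoeff) (hsq : ¬ p ^ 2 ∣ f.leadingCoeff * g.leadingCoeff ^ f.natDegree)
    (h0 : ¬ p ∣ f.coeff 0) : Irreducible ((f.comp g).map (algebraMap R K)) := by
  have hinj : Function.Injective (algebraMap R K) := IsFractionRing.injective R K
  by_contra hred
  have hf_pos : 0 < f.natDegree := by
    rw [← natDegree_map_eq_of_injective hinj]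
    exact hf.natDegree_pos
  obtain ⟨D, hDF, hD_pos, hpD⟩ := exists_dvd_natDegree_pos_not_dvd_leadingCoeff
    (by rw [natDegree_comp]; positivity) hred (by rwa [leadingCoeff_comp hg.ne'])
  obtain ⟨β, hβ⟩ := IsAlgClosed.exists_aeval_eq_zero_of_injective (AlgebraicClosure K)
    (by rw [IsScalarTower.algebraMap_eq R K]; exact (algebraMap K _).injective.comp hinj) D
    (natDegree_pos_iff_degree_pos.1 hD_pos).ne'
  have ht : aeval (aeval β g) f = 0 := by
    obtain ⟨E, hE⟩ := hDF
    rw [← aeval_comp, hE, map_mul, hβ, zero_mul]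
  have hdvd := leadingCoeff_dvd_coeff_zero_mul_pow_of_isIntegral_smul (K := K) hf ht
    (pow_ne_zero _ (leadingCoeff_ne_zero.2 (ne_zero_of_natDegree_gt hD_pos)))
    (isIntegral_pow_natDegree_smul_aeval (isIntegral_leadingCoeff_smul D β hβ) g)
  rcases hp.dvd_or_dvd (hpf.trans hdvd) with h | h
  · exact h0 h
  · exact hpD (hp.dvd_of_dvd_pow (hp.dvd_of_dvd_pow h))

end Polynomial

theorem stmt4 {K : Type*} [Field K] (m n : ℕ) (hm : 0 < m) (hn : 0 < n)
    (a b : ℕ → Polynomial K) (p q : Polynomial K)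
    (ha0 : a 0 ≠ 0) (ham : a m ≠ 0) (hbn : b n ≠ 0)
    (hpq : a m = p * q) (hp : Irreducible p)
    (f : Polynomial (Polynomial K)) (g : Polynomial (Polynomial K))
    (hf : f = ∑ i ∈ Finset.range (m + 1), Polynomial.C (a i) * Polynomial.X ^ i)
    (hg : g = ∑ j ∈ Finset.range (n + 1), Polynomial.C (b j) * Polynomial.X ^ j)
    (hirr : Irreducible (f.map (algebraMap (Polynomial K) (RatFunc K))))
    (hdeg : p.natDegree > (n - 1) * q.natDegree + m * n * (b n).natDegree + H1 a m) :
    Irreducible ((Polynomial.aeval g f).map (algebraMap (Polynomial K) (RatFunc K))) := by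
  subst hf hg
  rw [← comp_eq_aeval]
  have hinj : Function.Injective (algebraMap K[X] (RatFunc K)) := IsFractionRing.injective _ _
  have hgn := natDegree_sum_range_C_mul_X_pow hbn
  obtain rfl | hn2 : n = 1 ∨ 2 ≤ n := by omega
  · rw [Polynomial.map_comp]
    exact hirr.comp_of_natDegree_eq_one (by rw [natDegree_map_eq_of_injective hinj, hgn])
  have hp_not_dvd : ∀ r : K[X], r ≠ 0 → r.natDegree < p.natDegree → ¬ p ∣ r :=
    fun r hr hlt hpr => (natDegree_le_of_dvd hpr hr).not_gt hlt
  have ha0_le : (a 0).natDegree ≤ H1 a m :=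
    Finset.le_sup (f := fun i => (a i).natDegree) (Finset.mem_range.2 hm)
  have hq_le := Nat.le_mul_of_pos_left q.natDegree (by omega : 0 < n - 1)
  have hbn_le := Nat.le_mul_of_pos_left (b n).natDegree (Nat.mul_pos hm hn)
  have hpa0 : ¬ p ∣ a 0 := hp_not_dvd _ ha0 (by omega)
  have hpq' : ¬ p ∣ q := hp_not_dvd _ (right_ne_zero_of_mul (hpq ▸ ham)) (by omega)
  have hpbn : ¬ p ∣ b n := hp_not_dvd _ hbn (by omega)
  refine irreducible_map_comp_of_prime_dvd_leadingCoeff hp.prime hirr (by omega) ?_ ?_ (by simpa)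
  · rw [leadingCoeff_sum_range_C_mul_X_pow ham, hpq]
    exact dvd_mul_right p q
  · rw [leadingCoeff_sum_range_C_mul_X_pow ham, leadingCoeff_sum_range_C_mul_X_pow hbn,
      natDegree_sum_range_C_mul_X_pow ham, hpq, mul_assoc, pow_two]
    intro h
    rcases hp.prime.dvd_or_dvd ((mul_dvd_mul_iff_left hp.ne_zero).1 h) with h | h
    exacts [hpq' h, hpbn (hp.prime.dvd_of_dvd_pow h)]
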